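/- arXiv:1402.4756 — 3 statements merged into one kernel-verified Lean document; each statement's English description precedes it below -/
import Mathlib

section
/- Let F : ℝ → ℝ be an increasing homeomorphism with F(x+1) = F(x)+1, let F_t := F + t, let p, q be coprime integers with q ≥ 1, and suppose {t ∈ ℝ : Trans(F_t) = p/q} = [t^l, t^r] with t^l ≤ t^r. Then: (i) t = t^r if and only if F_t^{∘q}(x) ≥ x + p for all x ∈ ℝ and F_t^{∘q}(x₀) = x₀ + p for some x₀ ∈ ℝ; (ii) t = t^l if and only if F_t^{∘q}(x) ≤ x + p for all x ∈ ℝ and F_t^{∘q}(x₀) = x₀ + p for some x₀ ∈ ℝ; (iii) t^l < t < t^r if and only if the function x ↦ F_t^{∘q}(x) − x − p takes both strictly positive and strictly negative values. -/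
open Filter Topology Set

/-- `τ` is the translation number of `F`: for every `x`, `(F^[n] x - x)/n → τ`. -/
def IsTransNum (F : ℝ → ℝ) (τ : ℝ) : Prop :=
  ∀ x : ℝ, Filter.Tendsto (fun n : ℕ => (F^[n] x - x) / n) Filter.atTop (nhds τ)

/-!
`τ(F_t) = p/q` exactly when `F_t^q x = x + p` for some `x`, and `F_t^q x` is continuous and
strictly increasing in `t`. If `F_t^q x < x + p` at some point, this persists for slightly larger
`t`, whose translation number is then squeezed to `p/q` by monotonicity of `t ↦ τ(F_t)`; so at the
right endpoint `F_t^q ≥ id + p`. Conversely, if `F_t^q ≥ id + p`, then `F_s^q > id + p` for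
every `s > t`, leaving no periodic point of type `p/q`. The left endpoint is symmetric, and the
interior case follows from the intermediate value theorem.
-/

namespace CircleDeg1Lift

-- The family `F_t` of the paper.
def addConst (f : CircleDeg1Lift) (t : ℝ) : CircleDeg1Lift where
  toFun x := f x + t
  monotone' _ _ h := add_le_add_left (f.monotone h) t
  map_add_one' x := by rw [f.map_add_one, add_right_comm]

@[simp]
theorem addConst_apply (f : CircleDeg1Lift) (t x : ℝ) : f.addConst t x = f x + t := rfl

def modeLockingSet (f : CircleDeg1Lift) (r : ℝ) : Set ℝ :=
  {t | (f.addConst t).translationNumber = r}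

variable {f : CircleDeg1Lift}

theorem addConst_mono : Monotone f.addConst := fun _ _ hst x => add_le_add_right hst (f x)

theorem translationNumber_addConst_mono : Monotone fun t => (f.addConst t).translationNumber :=
  translationNumber_mono.comp addConst_mono

theorem iterate_addConst_lt {s t : ℝ} (hst : s < t) {n : ℕ} (hn : 0 < n) (x : ℝ) :
    (f.addConst s)^[n] x < (f.addConst t)^[n] x := by
  obtain ⟨m, rfl⟩ := Nat.exists_eq_add_one_of_ne_zero hn.ne'
  simp only [Function.iterate_succ_apply', addConst_apply]
  exact add_lt_add_of_le_of_lt (f.monotone (iterate_mono (addConst_mono hst.le) m x)) hst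

theorem continuous_iterate_addConst_apply (hf : Continuous f) (n : ℕ) (x : ℝ) :
    Continuous fun t => (f.addConst t)^[n] x := by
  induction n with
  | zero => exact continuous_const
  | succ n ih =>
    simp only [Function.iterate_succ_apply', addConst_apply]
    exact (hf.comp ih).add continuous_id

theorem continuous_addConst (hf : Continuous f) (t : ℝ) : Continuous (f.addConst t) :=
  hf.add continuous_const

theorem translationNumber_le_div_of_iterate_le {p : ℤ} {q : ℕ} (hq : 0 < q) {x : ℝ}
    (h : f^[q] x ≤ x + p) : f.translationNumber ≤ p / q := by
  rw [le_div_iff₀ (Nat.cast_pos.2 hq), mul_comm, ← translationNumber_pow]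
  exact translationNumber_le_of_le_add_int _ (by rwa [coe_pow])

theorem div_le_translationNumber_of_le_iterate {p : ℤ} {q : ℕ} (hq : 0 < q) {x : ℝ}
    (h : x + p ≤ f^[q] x) : (p : ℝ) / q ≤ f.translationNumber := by
  rw [div_le_iff₀ (Nat.cast_pos.2 hq), mul_comm, ← translationNumber_pow]
  exact le_translationNumber_of_add_int_le _ (by rwa [coe_pow])

section ModeLocking

variable (hf : Continuous f) {p : ℤ} {q : ℕ} (hq : 0 < q)
include hf hq

theorem mem_modeLockingSet_iff {t : ℝ} :
    t ∈ f.modeLockingSet (p / q) ↔ ∃ x, (f.addConst t)^[q] x = x + p := by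
  rw [modeLockingSet, Set.mem_ofPred,
    translationNumber_eq_rat_iff _ (continuous_addConst hf t) hq, coe_pow]

theorem isGreatest_modeLockingSet_iff {t : ℝ} :
    IsGreatest (f.modeLockingSet (p / q)) t ↔
      (∀ x, x + p ≤ (f.addConst t)^[q] x) ∧ ∃ x, (f.addConst t)^[q] x = x + p := by
  rw [IsGreatest, mem_modeLockingSet_iff hf hq, and_comm]
  refine and_congr_left fun ⟨x₀, hx₀⟩ => ⟨fun hmax x => ?_, fun hge s hs => ?_⟩
  · by_contra! hlt
    obtain ⟨t', htt', ht'⟩ := ((continuous_iterate_addConst_apply hf q x).continuousAt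
      |>.eventually_lt continuousAt_const hlt).exists_gt
    refine htt'.not_ge (hmax (le_antisymm (translationNumber_le_div_of_iterate_le hq ht'.le) ?_))
    calc (p : ℝ) / q = (f.addConst t).translationNumber :=
          ((mem_modeLockingSet_iff hf hq).2 ⟨x₀, hx₀⟩).symm
      _ ≤ (f.addConst t').translationNumber := translationNumber_addConst_mono htt'.le
  · obtain ⟨x, hx⟩ := (mem_modeLockingSet_iff hf hq).1 hs
    by_contra! hts
    exact (hge x).not_gt (hx ▸ iterate_addConst_lt hts hq x)

theorem isLeast_modeLockingSet_iff {t : ℝ} :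
    IsLeast (f.modeLockingSet (p / q)) t ↔
      (∀ x, (f.addConst t)^[q] x ≤ x + p) ∧ ∃ x, (f.addConst t)^[q] x = x + p := by
  rw [IsLeast, mem_modeLockingSet_iff hf hq, and_comm]
  refine and_congr_left fun ⟨x₀, hx₀⟩ => ⟨fun hmin x => ?_, fun hle s hs => ?_⟩
  · by_contra! hlt
    obtain ⟨t', ht't, ht'⟩ := (continuousAt_const.eventually_lt
      (continuous_iterate_addConst_apply hf q x).continuousAt hlt).exists_lt
    refine ht't.not_ge (hmin (le_antisymm ?_ (div_le_translationNumber_of_le_iterate hq ht'.le)))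
    calc (f.addConst t').translationNumber ≤ (f.addConst t).translationNumber :=
          translationNumber_addConst_mono ht't.le
      _ = p / q := (mem_modeLockingSet_iff hf hq).2 ⟨x₀, hx₀⟩
  · obtain ⟨x, hx⟩ := (mem_modeLockingSet_iff hf hq).1 hs
    by_contra! hst
    exact (hle x).not_gt (hx ▸ iterate_addConst_lt hst hq x)

theorem mem_modeLockingSet_not_isGreatest_not_isLeast_iff {t : ℝ} :
    (t ∈ f.modeLockingSet (p / q) ∧ ¬IsGreatest (f.modeLockingSet (p / q)) t ∧
        ¬IsLeast (f.modeLockingSet (p / q)) t) ↔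
      (∃ x, 0 < (f.addConst t)^[q] x - x - p) ∧ ∃ x, (f.addConst t)^[q] x - x - p < 0 := by
  simp only [isGreatest_modeLockingSet_iff hf hq, isLeast_modeLockingSet_iff hf hq,
    mem_modeLockingSet_iff hf hq, sub_sub, sub_pos, sub_neg]
  constructor
  · rintro ⟨hfix, hnotge, hnotle⟩
    constructor
    · by_contra! hle
      exact hnotle ⟨hle, hfix⟩
    · by_contra! hge
      exact hnotge ⟨hge, hfix⟩
  · rintro ⟨⟨a, ha⟩, ⟨b, hb⟩⟩
    refine ⟨?_, fun h => (h.1 b).not_gt hb, fun h => (h.1 a).not_gt ha⟩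
    exact intermediate_value_univ₂ ((continuous_addConst hf t).iterate q)
      (continuous_add_const _) hb.le ha.le

end ModeLocking

end CircleDeg1Lift

open CircleDeg1Lift in
theorem stmt_2_general (F : ℝ → ℝ)
    (hFmono : StrictMono F) (hFcont : Continuous F)
    (hFdeg : ∀ x : ℝ, F (x + 1) = F x + 1)
    (τ : ℝ → ℝ)
    (hτ : ∀ t : ℝ, IsTransNum (fun x => F x + t) (τ t))
    (p : ℤ) (q : ℕ) (hq : 1 ≤ q)
    (tl tr : ℝ) (hltr : tl ≤ tr)
    (hfiber : {t : ℝ | τ t = (p : ℝ) / (q : ℝ)} = Set.Icc tl tr) :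
    -- (i) characterization of the right endpoint
    (∀ t : ℝ, t = tr ↔
      ((∀ x : ℝ, (fun x => F x + t)^[q] x ≥ x + (p : ℝ)) ∧
        ∃ x₀ : ℝ, (fun x => F x + t)^[q] x₀ = x₀ + (p : ℝ))) ∧
    -- (ii) characterization of the left endpoint
    (∀ t : ℝ, t = tl ↔
      ((∀ x : ℝ, (fun x => F x + t)^[q] x ≤ x + (p : ℝ)) ∧
        ∃ x₀ : ℝ, (fun x => F x + t)^[q] x₀ = x₀ + (p : ℝ))) ∧
    -- (iii) characterization of interior points
    (∀ t : ℝ, (tl < t ∧ t < tr) ↔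
      ((∃ x : ℝ, (fun x => F x + t)^[q] x - x - (p : ℝ) > 0) ∧
        ∃ x : ℝ, (fun x => F x + t)^[q] x - x - (p : ℝ) < 0)) := by
  let f : CircleDeg1Lift := ⟨⟨F, hFmono.monotone⟩, hFdeg⟩
  have hS : f.modeLockingSet (p / q) = Set.Icc tl tr := by
    rw [← hfiber]
    ext t
    have hτt : τ t = (f.addConst t).translationNumber := by
      have hlim : IsTransNum (f.addConst t) (τ t) := hτ t
      exact tendsto_nhds_unique (hlim 0) <| by
        simpa only [coe_pow] using (f.addConst t).tendsto_translationNumber 0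
    rw [Set.mem_ofPred, hτt]
    rfl
  have hright (t : ℝ) : t = tr ↔ IsGreatest (f.modeLockingSet (p / q)) t :=
    hS ▸ ⟨by rintro rfl; exact isGreatest_Icc hltr, (·.unique (isGreatest_Icc hltr))⟩
  have hleft (t : ℝ) : t = tl ↔ IsLeast (f.modeLockingSet (p / q)) t :=
    hS ▸ ⟨by rintro rfl; exact isLeast_Icc hltr, (·.unique (isLeast_Icc hltr))⟩
  refine ⟨fun t => (hright t).trans (isGreatest_modeLockingSet_iff hFcont hq),
    fun t => (hleft t).trans (isLeast_modeLockingSet_iff hFcont hq), fun t => ?_⟩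
  have hinterior := mem_modeLockingSet_not_isGreatest_not_isLeast_iff (f := f) (p := p) (t := t)
    hFcont hq
  rw [← hright, ← hleft, hS] at hinterior
  exact Iff.trans ⟨fun ⟨hl, hr⟩ => ⟨⟨hl.le, hr.le⟩, hr.ne, hl.ne'⟩,
    fun ⟨⟨hl, hr⟩, hne_r, hne_l⟩ => ⟨hl.lt_of_ne' hne_l, hr.lt_of_ne hne_r⟩⟩ hinterior

theorem stmt_2 (F : ℝ → ℝ)
    (hFmono : StrictMono F) (hFcont : Continuous F) (hFsurj : Function.Surjective F)
    (hFdeg : ∀ x : ℝ, F (x + 1) = F x + 1)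
    (τ : ℝ → ℝ)
    (hτ : ∀ t : ℝ, IsTransNum (fun x => F x + t) (τ t))
    (p : ℤ) (q : ℕ) (hq : 1 ≤ q) (hpq : Nat.Coprime p.natAbs q)
    (tl tr : ℝ) (hltr : tl ≤ tr)
    (hfiber : {t : ℝ | τ t = (p : ℝ) / (q : ℝ)} = Set.Icc tl tr) :
    -- (i) characterization of the right endpoint
    (∀ t : ℝ, t = tr ↔
      ((∀ x : ℝ, (fun x => F x + t)^[q] x ≥ x + (p : ℝ)) ∧
        ∃ x₀ : ℝ, (fun x => F x + t)^[q] x₀ = x₀ + (p : ℝ))) ∧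
    -- (ii) characterization of the left endpoint
    (∀ t : ℝ, t = tl ↔
      ((∀ x : ℝ, (fun x => F x + t)^[q] x ≤ x + (p : ℝ)) ∧
        ∃ x₀ : ℝ, (fun x => F x + t)^[q] x₀ = x₀ + (p : ℝ))) ∧
    -- (iii) characterization of interior points
    (∀ t : ℝ, (tl < t ∧ t < tr) ↔
      ((∃ x : ℝ, (fun x => F x + t)^[q] x - x - (p : ℝ) > 0) ∧
        ∃ x : ℝ, (fun x => F x + t)^[q] x - x - (p : ℝ) < 0)) :=
  stmt_2_general F hFmono hFcont hFdeg τ hτ p q hq tl tr hltr hfiber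
end

section
/- Let φ : ℝ → ℝ be Lipschitz with constant K > 0 and 1-periodic, let J = (−1/K, 1/K), and let p, q be coprime integers with q ≥ 1. Define γ^l_{p/q}(a) = inf {t : Trans(F_{t,a}) = p/q} and γ^r_{p/q}(a) = sup {t : Trans(F_{t,a}) = p/q}. Then for all a₀, a₁ ∈ J with a₀ ≠ a₁: −sup φ ≤ (γ^l_{p/q}(a₁) − γ^l_{p/q}(a₀))/(a₁ − a₀) ≤ −inf φ, and −sup φ ≤ (γ^r_{p/q}(a₁) − γ^r_{p/q}(a₀))/(a₁ − a₀) ≤ −inf φ. In particular γ^l_{p/q} and γ^r_{p/q} are Lipschitz continuous on J. -/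
/-!
For a continuous lift `f` of a circle map, write `t + f` for `x ↦ t + f x`. Then
`t ↦ τ (t + f)` is monotone and its fibre over a
rational `r = m / n` is nonempty (intermediate value theorem for `t ↦ (t + f)^[n] 0`) and bounded
(`|τ f - f 0| ≤ 1`). If `f ≤ g + c` pointwise, then `τ (t + f) ≤ τ (t + c + g)`, so each endpoint
of the fibre of `g` lies at most `c` to the right of the corresponding endpoint for `f`. The lifts
`x ↦ x + aᵢ φ x` differ by `(a₁ - a₀) φ x`, which lies between `(a₁ - a₀) inf φ` and
`(a₁ - a₀) sup φ`; this bounds the difference quotients of both endpoints.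
-/

open Filter Topology Set

open Function

section Fibers

variable {α β : Type*} [ConditionallyCompleteLinearOrder α] [PartialOrder β] {f : α → β} {r : β}

theorem Monotone.csInf_setOf_eq_le (hf : Monotone f) (hne : {t | f t = r}.Nonempty)
    (hbdd : BddBelow {t | f t = r}) {s : α} (hs : r ≤ f s) : sInf {t | f t = r} ≤ s := by
  obtain ⟨u, hu⟩ := hne
  rcases le_total s u with hsu | hus
  · exact csInf_le hbdd (le_antisymm (hu ▸ hf hsu) hs)
  · exact (csInf_le hbdd hu).trans hus

theorem Monotone.le_csSup_setOf_eq (hf : Monotone f) (hne : {t | f t = r}.Nonempty)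
    (hbdd : BddAbove {t | f t = r}) {s : α} (hs : f s ≤ r) : s ≤ sSup {t | f t = r} := by
  obtain ⟨u, hu⟩ := hne
  rcases le_total u s with hus | hsu
  · exact le_csSup hbdd (le_antisymm hs (hu ▸ hf hus))
  · exact hsu.trans (le_csSup hbdd hu)

end Fibers

section ShiftedFibers

variable {f g : ℝ → ℝ} {r c : ℝ}

theorem csInf_setOf_eq_le_add (hg : Monotone g) (hfne : {t | f t = r}.Nonempty)
    (hgne : {t | g t = r}.Nonempty) (hgbdd : BddBelow {t | g t = r})
    (hfg : ∀ t, f t ≤ g (t + c)) : sInf {t | g t = r} ≤ sInf {t | f t = r} + c :=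
  sub_le_iff_le_add.mp <| le_csInf hfne fun t ht =>
    sub_le_iff_le_add.mpr <| hg.csInf_setOf_eq_le hgne hgbdd (ht ▸ hfg t)

theorem csSup_setOf_eq_le_add (hf : Monotone f) (hfne : {t | f t = r}.Nonempty)
    (hfbdd : BddAbove {t | f t = r}) (hgne : {t | g t = r}.Nonempty)
    (hfg : ∀ t, f t ≤ g (t + c)) : sSup {t | g t = r} ≤ sSup {t | f t = r} + c :=
  csSup_le hgne fun t ht => sub_le_iff_le_add.mp <|
    hf.le_csSup_setOf_eq hfne hfbdd ((sub_add_cancel t c ▸ hfg (t - c)).trans_eq ht)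

end ShiftedFibers

theorem div_sub_div_mem_Icc_of_forall_lt {γ : ℝ → ℝ} {s : Set ℝ} {lo hi : ℝ}
    (h : ∀ a₀ ∈ s, ∀ a₁ ∈ s, a₀ < a₁ → γ a₁ - γ a₀ ∈ Icc (lo * (a₁ - a₀)) (hi * (a₁ - a₀)))
    {a₀ a₁ : ℝ} (ha₀ : a₀ ∈ s) (ha₁ : a₁ ∈ s) (hne : a₀ ≠ a₁) :
    (γ a₁ - γ a₀) / (a₁ - a₀) ∈ Icc lo hi := by
  wlog hlt : a₀ < a₁ generalizing a₀ a₁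
  · rw [← slope_def_field, slope_comm, slope_def_field]
    exact this ha₁ ha₀ hne.symm (hne.lt_or_gt.resolve_left hlt)
  have hδ : 0 < a₁ - a₀ := sub_pos.mpr hlt
  rw [mem_Icc, le_div_iff₀ hδ, div_le_iff₀ hδ]
  exact h a₀ ha₀ a₁ ha₁ hlt

theorem IsTransNum.eq_translationNumber {f : CircleDeg1Lift} {τ : ℝ} (h : IsTransNum f τ) :
    τ = f.translationNumber :=
  tendsto_nhds_unique (h 0) <| by
    simpa only [CircleDeg1Lift.coe_pow] using f.tendsto_translationNumber 0

theorem monotone_add_mul_of_lipschitzWith {φ : ℝ → ℝ} {K : NNReal} {a : ℝ}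
    (hφ : LipschitzWith K φ) (ha : |a| * K ≤ 1) : Monotone fun x => x + a * φ x := by
  intro x y hxy
  have : |a * φ y - a * φ x| ≤ y - x := calc
    |a * φ y - a * φ x| = |a| * dist (φ y) (φ x) := by rw [← mul_sub, abs_mul, Real.dist_eq]
    _ ≤ |a| * (K * dist y x) := by gcongr; exact hφ.dist_le_mul y x
    _ ≤ dist y x := by nlinarith [dist_nonneg (x := y) (y := x)]
    _ = y - x := by rw [Real.dist_eq, abs_of_nonneg (sub_nonneg.mpr hxy)]
  dsimp only
  linarith [neg_abs_le (a * φ y - a * φ x)]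

theorem continuous_iterate_apply {X Y : Type*} [TopologicalSpace X] [TopologicalSpace Y]
    {F : X → Y → Y} (hF : Continuous (uncurry F)) (n : ℕ) (y : Y) :
    Continuous fun x => (F x)^[n] y := by
  induction n with
  | zero => exact continuous_const
  | succ n ih =>
    simp only [iterate_succ_apply']
    exact hF.comp (continuous_id.prodMk ih)

namespace CircleDeg1Lift

local notation "τ" => translationNumber

def ofPeriodicDisplacement {ψ : ℝ → ℝ} (hψ : Periodic ψ 1) (hmono : Monotone fun x => x + ψ x) :
    CircleDeg1Lift where
  toFun x := x + ψ x
  monotone' := hmono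
  map_add_one' x := by rw [hψ]; ring

def translationFiber (f : CircleDeg1Lift) (r : ℝ) : Set ℝ :=
  {t | τ (↑(translate (Multiplicative.ofAdd t)) * f) = r}

variable {f g : CircleDeg1Lift}

theorem translate_mul_apply (t x : ℝ) :
    (↑(translate (Multiplicative.ofAdd t)) * f) x = t + f x := by
  simp

theorem translationNumber_translate_mul_le {c : ℝ} (h : ∀ x, f x ≤ g x + c) (t : ℝ) :
    τ (↑(translate (Multiplicative.ofAdd t)) * f) ≤
      τ (↑(translate (Multiplicative.ofAdd (t + c))) * g) :=
  translationNumber_mono fun x => by simp only [translate_mul_apply]; linarith [h x]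

theorem monotone_translationNumber_translate_mul (f : CircleDeg1Lift) :
    Monotone fun t => τ (↑(translate (Multiplicative.ofAdd t)) * f) := fun s t hst =>
  translationNumber_mono fun x => by simp only [translate_mul_apply]; linarith

theorem dist_translationNumber_translate_mul_le (f : CircleDeg1Lift) (t : ℝ) :
    dist (t + f 0) (τ (↑(translate (Multiplicative.ofAdd t)) * f)) ≤ 1 := by
  simpa only [translate_mul_apply] using
    (↑(translate (Multiplicative.ofAdd t)) * f).dist_map_zero_translationNumber_le

theorem isBounded_translationFiber (f : CircleDeg1Lift) (r : ℝ) :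
    Bornology.IsBounded (f.translationFiber r) := by
  refine (Metric.isBounded_closedBall (x := r - f 0) (r := 1)).subset fun t ht => ?_
  have := f.dist_translationNumber_translate_mul_le t
  rw [show τ _ = r from ht, Real.dist_eq] at this
  rwa [Metric.mem_closedBall, Real.dist_eq, show t - (r - f 0) = t + f 0 - r by ring]

theorem translationFiber_nonempty (hf : Continuous f) (r : ℚ) :
    (f.translationFiber r).Nonempty := by
  set F : ℝ → CircleDeg1Lift := fun t => ↑(translate (Multiplicative.ofAdd t)) * f
  have hden : (0 : ℝ) < r.den := by exact_mod_cast r.den_pos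
  have hr : (r : ℝ) * r.den = r.num := by rw [Rat.cast_def]; field_simp
  have hcont : Continuous fun t => (F t ^ r.den) 0 := by
    simp only [coe_pow]
    exact continuous_iterate_apply (F := fun t x => t + f x) (by fun_prop) _ _
  have hτF (t : ℝ) : |τ (F t) - (t + f 0)| ≤ 1 := by
    rw [abs_sub_comm, ← Real.dist_eq]; exact f.dist_translationNumber_translate_mul_le t
  have hlo : (F (r - f 0 - 2) ^ r.den) 0 ≤ 0 + r.num := by
    refine (map_lt_of_translationNumber_lt_int _ ?_ 0).le
    rw [translationNumber_pow, ← hr]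
    have := (abs_le.mp (hτF (r - f 0 - 2))).2
    nlinarith
  have hhi : 0 + r.num ≤ (F (r - f 0 + 2) ^ r.den) 0 := by
    refine (lt_map_of_int_lt_translationNumber _ ?_ 0).le
    rw [translationNumber_pow, ← hr]
    have := (abs_le.mp (hτF (r - f 0 + 2))).1
    nlinarith
  obtain ⟨t, -, ht⟩ := intermediate_value_Icc (by linarith) hcont.continuousOn ⟨hlo, hhi⟩
  refine ⟨t, (translationNumber_of_map_pow_eq_add_int _ ht r.den_pos).trans ?_⟩
  rw [Rat.cast_def]

theorem csInf_translationFiber_le_add (hf : Continuous f) (hg : Continuous g) {c : ℝ}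
    (h : ∀ x, f x ≤ g x + c) (r : ℚ) :
    sInf (g.translationFiber r) ≤ sInf (f.translationFiber r) + c :=
  csInf_setOf_eq_le_add g.monotone_translationNumber_translate_mul (translationFiber_nonempty hf r)
    (translationFiber_nonempty hg r) (g.isBounded_translationFiber r).bddBelow
    (translationNumber_translate_mul_le h)

theorem csSup_translationFiber_le_add (hf : Continuous f) (hg : Continuous g) {c : ℝ}
    (h : ∀ x, f x ≤ g x + c) (r : ℚ) :
    sSup (g.translationFiber r) ≤ sSup (f.translationFiber r) + c :=
  csSup_setOf_eq_le_add f.monotone_translationNumber_translate_mul (translationFiber_nonempty hf r)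
    (f.isBounded_translationFiber r).bddAbove (translationFiber_nonempty hg r)
    (translationNumber_translate_mul_le h)

theorem csInf_translationFiber_sub_mem_Icc (hf : Continuous f) (hg : Continuous g) {m M : ℝ}
    (hm : ∀ x, m ≤ g x - f x) (hM : ∀ x, g x - f x ≤ M) (r : ℚ) :
    sInf (g.translationFiber r) - sInf (f.translationFiber r) ∈ Icc (-M) (-m) := by
  have hfg := csInf_translationFiber_le_add hf hg (c := -m) (fun x => by linarith [hm x]) r
  have hgf := csInf_translationFiber_le_add hg hf (c := M) (fun x => by linarith [hM x]) r
  constructor <;> linarith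

theorem csSup_translationFiber_sub_mem_Icc (hf : Continuous f) (hg : Continuous g) {m M : ℝ}
    (hm : ∀ x, m ≤ g x - f x) (hM : ∀ x, g x - f x ≤ M) (r : ℚ) :
    sSup (g.translationFiber r) - sSup (f.translationFiber r) ∈ Icc (-M) (-m) := by
  have hfg := csSup_translationFiber_le_add hf hg (c := -m) (fun x => by linarith [hm x]) r
  have hgf := csSup_translationFiber_le_add hg hf (c := M) (fun x => by linarith [hM x]) r
  constructor <;> linarith

theorem translationFiber_div_sub_div_mem_Icc {φ : ℝ → ℝ} (hφ : IsCompact (range φ))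
    {s : Set ℝ} {f : ℝ → CircleDeg1Lift} (hf_cont : ∀ a ∈ s, Continuous (f a))
    (hf_apply : ∀ a ∈ s, ∀ x, f a x = x + a * φ x) (r : ℚ) {a₀ a₁ : ℝ} (ha₀ : a₀ ∈ s)
    (ha₁ : a₁ ∈ s) (hne : a₀ ≠ a₁) :
    (sInf ((f a₁).translationFiber r) - sInf ((f a₀).translationFiber r)) / (a₁ - a₀) ∈
        Icc (-sSup (range φ)) (-sInf (range φ)) ∧
      (sSup ((f a₁).translationFiber r) - sSup ((f a₀).translationFiber r)) / (a₁ - a₀) ∈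
        Icc (-sSup (range φ)) (-sInf (range φ)) := by
  have hbounds {b₀ b₁ : ℝ} (hb₀ : b₀ ∈ s) (hb₁ : b₁ ∈ s) (hlt : b₀ < b₁) :
      (∀ x, sInf (range φ) * (b₁ - b₀) ≤ f b₁ x - f b₀ x) ∧
        ∀ x, f b₁ x - f b₀ x ≤ sSup (range φ) * (b₁ - b₀) := by
    have hdiff (x : ℝ) : f b₁ x - f b₀ x = φ x * (b₁ - b₀) := by
      rw [hf_apply b₀ hb₀, hf_apply b₁ hb₁]; ring
    simp only [hdiff]
    have hδ : 0 ≤ b₁ - b₀ := sub_nonneg.mpr hlt.le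
    exact ⟨fun x => mul_le_mul_of_nonneg_right (csInf_le hφ.bddBelow ⟨x, rfl⟩) hδ,
      fun x => mul_le_mul_of_nonneg_right (le_csSup hφ.bddAbove ⟨x, rfl⟩) hδ⟩
  refine ⟨div_sub_div_mem_Icc_of_forall_lt (γ := fun a => sInf ((f a).translationFiber r)) ?_
    ha₀ ha₁ hne, div_sub_div_mem_Icc_of_forall_lt (γ := fun a => sSup ((f a).translationFiber r))
    ?_ ha₀ ha₁ hne⟩ <;> intro b₀ hb₀ b₁ hb₁ hlt <;> rw [neg_mul, neg_mul]
  · exact csInf_translationFiber_sub_mem_Icc (hf_cont b₀ hb₀) (hf_cont b₁ hb₁)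
      (hbounds hb₀ hb₁ hlt).1 (hbounds hb₀ hb₁ hlt).2 r
  · exact csSup_translationFiber_sub_mem_Icc (hf_cont b₀ hb₀) (hf_cont b₁ hb₁)
      (hbounds hb₀ hb₁ hlt).1 (hbounds hb₀ hb₁ hlt).2 r

end CircleDeg1Lift

theorem exists_circleDeg1Lift_setOf_isTransNum_eq {φ : ℝ → ℝ} {K : NNReal}
    (hφ : LipschitzWith K φ) (hper : Periodic φ 1) {a : ℝ} (ha : |a| * K ≤ 1) {τ : ℝ → ℝ}
    (hτ : ∀ t, IsTransNum (fun x => x + t + a * φ x) (τ t)) :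
    ∃ f : CircleDeg1Lift, Continuous f ∧ (∀ x, f x = x + a * φ x) ∧
      ∀ r, {t | τ t = r} = f.translationFiber r := by
  set f := CircleDeg1Lift.ofPeriodicDisplacement (ψ := fun x => a * φ x)
    (fun x => by simp only [hper x]) (monotone_add_mul_of_lipschitzWith hφ ha)
  refine ⟨f, continuous_id.add (continuous_const.mul hφ.continuous), fun _ => rfl, fun r => ?_⟩
  have hF (t : ℝ) : ⇑(↑(CircleDeg1Lift.translate (Multiplicative.ofAdd t)) * f) =
      fun x => x + t + a * φ x :=
    funext fun x => (CircleDeg1Lift.translate_mul_apply t x).trans (by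
      change t + (x + a * φ x) = _; ring)
  ext t
  have h := hτ t
  rw [← hF t] at h
  exact iff_of_eq (congrArg (· = r) h.eq_translationNumber)

theorem stmt_5_general (φ : ℝ → ℝ) (K : ℝ)
    (hLip : ∀ x y : ℝ, |φ x - φ y| ≤ K * |x - y|)
    (hper : ∀ x : ℝ, φ (x + 1) = φ x)
    (τ : ℝ → ℝ → ℝ)
    (hτ : ∀ t : ℝ, ∀ a ∈ Set.Ioo (-(1 / K)) (1 / K),
      IsTransNum (fun x => x + t + a * φ x) (τ t a))
    (p : ℤ) (q : ℕ) :
    ∀ a₀ ∈ Set.Ioo (-(1 / K)) (1 / K), ∀ a₁ ∈ Set.Ioo (-(1 / K)) (1 / K), a₀ ≠ a₁ →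
      (-sSup (Set.range φ) ≤
          (sInf {t : ℝ | τ t a₁ = (p : ℝ) / (q : ℝ)} -
            sInf {t : ℝ | τ t a₀ = (p : ℝ) / (q : ℝ)}) / (a₁ - a₀) ∧
        (sInf {t : ℝ | τ t a₁ = (p : ℝ) / (q : ℝ)} -
            sInf {t : ℝ | τ t a₀ = (p : ℝ) / (q : ℝ)}) / (a₁ - a₀) ≤
          -sInf (Set.range φ)) ∧
      (-sSup (Set.range φ) ≤
          (sSup {t : ℝ | τ t a₁ = (p : ℝ) / (q : ℝ)} -
            sSup {t : ℝ | τ t a₀ = (p : ℝ) / (q : ℝ)}) / (a₁ - a₀) ∧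
        (sSup {t : ℝ | τ t a₁ = (p : ℝ) / (q : ℝ)} -
            sSup {t : ℝ | τ t a₀ = (p : ℝ) / (q : ℝ)}) / (a₁ - a₀) ≤
          -sInf (Set.range φ)) := by
  have hφ : LipschitzWith (Real.toNNReal K) φ := .of_dist_le' hLip
  have hrange := Periodic.compact_of_continuous hper one_ne_zero hφ.continuous
  have hJ (a : ℝ) (ha : a ∈ Ioo (-(1 / K)) (1 / K)) : |a| * Real.toNNReal K ≤ 1 := by
    have hK : 0 < K := one_div_pos.mp (by linarith [ha.1, ha.2])
    rw [Real.coe_toNNReal _ hK.le, ← le_div_iff₀ hK]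
    exact (abs_lt.mpr ha).le
  choose! f hf_cont hf_apply hf_fiber using fun a ha =>
    exists_circleDeg1Lift_setOf_isTransNum_eq hφ hper (hJ a ha) (hτ · a ha)
  have hr : (p : ℝ) / q = ((p / q : ℚ) : ℝ) := by push_cast; rfl
  intro a₀ ha₀ a₁ ha₁ hne
  rw [hr, hf_fiber a₀ ha₀, hf_fiber a₁ ha₁]
  exact CircleDeg1Lift.translationFiber_div_sub_div_mem_Icc hrange hf_cont hf_apply _ ha₀ ha₁ hne

theorem stmt_5 (φ : ℝ → ℝ) (K : ℝ) (hK : 0 < K)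
    (hLip : ∀ x y : ℝ, |φ x - φ y| ≤ K * |x - y|)
    (hper : ∀ x : ℝ, φ (x + 1) = φ x)
    (τ : ℝ → ℝ → ℝ)
    (hτ : ∀ t : ℝ, ∀ a ∈ Set.Ioo (-(1 / K)) (1 / K),
      IsTransNum (fun x => x + t + a * φ x) (τ t a))
    (p : ℤ) (q : ℕ) (hq : 1 ≤ q) (hpq : Nat.Coprime p.natAbs q) :
    ∀ a₀ ∈ Set.Ioo (-(1 / K)) (1 / K), ∀ a₁ ∈ Set.Ioo (-(1 / K)) (1 / K), a₀ ≠ a₁ →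
      (-sSup (Set.range φ) ≤
          (sInf {t : ℝ | τ t a₁ = (p : ℝ) / (q : ℝ)} -
            sInf {t : ℝ | τ t a₀ = (p : ℝ) / (q : ℝ)}) / (a₁ - a₀) ∧
        (sInf {t : ℝ | τ t a₁ = (p : ℝ) / (q : ℝ)} -
            sInf {t : ℝ | τ t a₀ = (p : ℝ) / (q : ℝ)}) / (a₁ - a₀) ≤
          -sInf (Set.range φ)) ∧
      (-sSup (Set.range φ) ≤
          (sSup {t : ℝ | τ t a₁ = (p : ℝ) / (q : ℝ)} -
            sSup {t : ℝ | τ t a₀ = (p : ℝ) / (q : ℝ)}) / (a₁ - a₀) ∧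
        (sSup {t : ℝ | τ t a₁ = (p : ℝ) / (q : ℝ)} -
            sSup {t : ℝ | τ t a₀ = (p : ℝ) / (q : ℝ)}) / (a₁ - a₀) ≤
          -sInf (Set.range φ)) :=
  stmt_5_general φ K hLip hper τ hτ p q
end

section
/- Let φ : ℝ → ℝ be Lipschitz with constant K > 0 and 1-periodic, let J = (−1/K, 1/K), and let p, q be coprime integers with q ≥ 1. If for some a₀ ∈ J the fiber {t : Trans(F_{t,a₀}) = p/q} is an interval of positive length (i.e. γ^r_{p/q}(a₀) > γ^l_{p/q}(a₀)), then the Arnol'd tongue T_{p/q} = {(t,a) ∈ ℝ × J : Trans(F_{t,a}) = p/q} has nonempty interior in ℝ². -/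
/-!
Pick two parameters `t₁ < t₂` in the fiber over `a₀` and let `tm` be their midpoint. Since `φ` is
bounded, for `(t, a)` close to `(tm, a₀)` the perturbation `(a - a₀) φ` is smaller than the gap
between `t` and either `tᵢ`, so `F_{t₁,a₀} ≤ F_{t,a} ≤ F_{t₂,a₀}` pointwise. The translation number
is monotone, so it equals `p/q` on a whole neighbourhood of `(tm, a₀)`.
-/

open Filter Topology Set

noncomputable def perturbedRotation {φ : ℝ → ℝ} {K : ℝ}
    (hLip : ∀ x y : ℝ, |φ x - φ y| ≤ K * |x - y|) (hper : ∀ x : ℝ, φ (x + 1) = φ x)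
    (t a : ℝ) (ha : |a| * K ≤ 1) : CircleDeg1Lift where
  toFun x := x + t + a * φ x
  monotone' x y hxy := by
    have hφ : a * (φ x - φ y) ≤ y - x :=
      calc a * (φ x - φ y) ≤ |a| * |φ x - φ y| := by rw [← abs_mul]; exact le_abs_self _
        _ ≤ |a| * (K * (y - x)) := by
          gcongr
          simpa [abs_of_nonneg (sub_nonneg.mpr hxy), abs_sub_comm] using hLip y x
        _ = |a| * K * (y - x) := by ring
        _ ≤ y - x := mul_le_of_le_one_left (sub_nonneg.mpr hxy) ha
    linarith
  map_add_one' x := by rw [hper]; ring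

theorem IsTransNum.translationNumber_eq {f : CircleDeg1Lift} {ρ : ℝ} (h : IsTransNum f ρ) :
    f.translationNumber = ρ :=
  f.translationNumber_eq_of_tendsto₀ (by simpa using h 0)

theorem abs_mul_le_one_of_mem_Ioo {a K : ℝ} (ha : a ∈ Ioo (-(1 / K)) (1 / K)) : |a| * K ≤ 1 := by
  have hK : 0 < K := one_div_pos.mp (by linarith [ha.1.trans ha.2])
  exact ((lt_div_iff₀ hK).mp (abs_lt.mpr ha)).le

theorem abs_le_of_periodic_of_lipschitz {φ : ℝ → ℝ} {K : ℝ}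
    (hLip : ∀ x y : ℝ, |φ x - φ y| ≤ K * |x - y|) (hper : ∀ x : ℝ, φ (x + 1) = φ x) (x : ℝ) :
    |φ x| ≤ |φ 0| + |K| := by
  have hfract : φ (Int.fract x) = φ x := by
    have h := (show Function.Periodic φ 1 from hper).sub_int_mul_eq (x := x) ⌊x⌋
    rwa [mul_one] at h
  have hdist : |φ (Int.fract x) - φ 0| ≤ |K| :=
    calc |φ (Int.fract x) - φ 0| ≤ K * |Int.fract x - 0| := hLip _ _
      _ ≤ |K| * 1 := by
        rw [sub_zero, abs_of_nonneg (Int.fract_nonneg x)]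
        exact mul_le_mul (le_abs_self K) (Int.fract_lt_one x).le (Int.fract_nonneg x) (abs_nonneg K)
      _ = |K| := mul_one _
  rw [← hfract]
  linarith [abs_sub_abs_le_abs_sub (φ (Int.fract x)) (φ 0)]

theorem perturbedRotation_le {φ : ℝ → ℝ} {K C : ℝ}
    (hLip : ∀ x y : ℝ, |φ x - φ y| ≤ K * |x - y|) (hper : ∀ x : ℝ, φ (x + 1) = φ x)
    (hC : ∀ x, |φ x| ≤ C) {t a t' a' : ℝ} (ha : |a| * K ≤ 1) (ha' : |a'| * K ≤ 1)
    (h : t + |a - a'| * C ≤ t') :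
    perturbedRotation hLip hper t a ha ≤ perturbedRotation hLip hper t' a' ha' := by
  intro x
  have hperturb : (a - a') * φ x ≤ |a - a'| * C :=
    calc (a - a') * φ x ≤ |a - a'| * |φ x| := by rw [← abs_mul]; exact le_abs_self _
      _ ≤ |a - a'| * C := by gcongr; exact hC x
  change x + t + a * φ x ≤ x + t' + a' * φ x
  linarith

theorem exists_lt_of_sInf_lt_sSup {s : Set ℝ} (h : sInf s < sSup s) : ∃ x ∈ s, ∃ y ∈ s, x < y := by
  by_contra! hs
  rcases Set.Subsingleton.eq_empty_or_singleton (fun x hx y hy => (hs y hy x hx).antisymm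
    (hs x hx y hy)) with rfl | ⟨x, rfl⟩ <;> simp at h

theorem mem_interior_transNum_fiber {φ : ℝ → ℝ} {K : ℝ}
    (hLip : ∀ x y : ℝ, |φ x - φ y| ≤ K * |x - y|) (hper : ∀ x : ℝ, φ (x + 1) = φ x)
    {τ : ℝ → ℝ → ℝ} (hτ : ∀ t : ℝ, ∀ a ∈ Ioo (-(1 / K)) (1 / K),
      IsTransNum (fun x => x + t + a * φ x) (τ t a))
    {ρ t₁ t₂ a₀ : ℝ} (ha₀ : a₀ ∈ Ioo (-(1 / K)) (1 / K))
    (ht₁ : τ t₁ a₀ = ρ) (ht₂ : τ t₂ a₀ = ρ) (hlt : t₁ < t₂) :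
    ((t₁ + t₂) / 2, a₀) ∈
      interior {ta : ℝ × ℝ | ta.2 ∈ Ioo (-(1 / K)) (1 / K) ∧ τ ta.1 ta.2 = ρ} := by
  obtain ⟨C, hC⟩ : ∃ C, ∀ x, |φ x| ≤ C := ⟨_, abs_le_of_periodic_of_lipschitz hLip hper⟩
  have hτF : ∀ t a (ha : a ∈ Ioo (-(1 / K)) (1 / K)),
      τ t a = (perturbedRotation hLip hper t a (abs_mul_le_one_of_mem_Ioo ha)).translationNumber :=
    fun t a ha => (IsTransNum.translationNumber_eq (f := perturbedRotation hLip hper t a _)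
      (hτ t a ha)).symm
  have hJ : ∀ᶠ ta : ℝ × ℝ in 𝓝 ((t₁ + t₂) / 2, a₀), ta.2 ∈ Ioo (-(1 / K)) (1 / K) :=
    continuous_snd.continuousAt.preimage_mem_nhds (isOpen_Ioo.mem_nhds ha₀)
  have hlow : ∀ᶠ ta : ℝ × ℝ in 𝓝 ((t₁ + t₂) / 2, a₀), t₁ + |ta.2 - a₀| * C < ta.1 :=
    ContinuousAt.eventually_lt (by fun_prop) (by fun_prop) (by simp; linarith)
  have hup : ∀ᶠ ta : ℝ × ℝ in 𝓝 ((t₁ + t₂) / 2, a₀), ta.1 + |ta.2 - a₀| * C < t₂ :=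
    ContinuousAt.eventually_lt (by fun_prop) (by fun_prop) (by simp; linarith)
  rw [mem_interior_iff_mem_nhds]
  filter_upwards [hJ, hlow, hup] with ⟨t, a⟩ ha hl hu
  refine ⟨ha, le_antisymm ?_ ?_⟩
  · rw [← ht₂, hτF t a ha, hτF t₂ a₀ ha₀]
    exact CircleDeg1Lift.translationNumber_mono (perturbedRotation_le hLip hper hC _ _ hu.le)
  · rw [← ht₁, hτF t a ha, hτF t₁ a₀ ha₀]
    refine CircleDeg1Lift.translationNumber_mono (perturbedRotation_le hLip hper hC _ _ ?_)
    rw [abs_sub_comm]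
    exact hl.le

theorem stmt_6_general (φ : ℝ → ℝ) (K : ℝ)
    (hLip : ∀ x y : ℝ, |φ x - φ y| ≤ K * |x - y|)
    (hper : ∀ x : ℝ, φ (x + 1) = φ x)
    (τ : ℝ → ℝ → ℝ)
    (hτ : ∀ t : ℝ, ∀ a ∈ Set.Ioo (-(1 / K)) (1 / K),
      IsTransNum (fun x => x + t + a * φ x) (τ t a))
    (p : ℤ) (q : ℕ)
    (a₀ : ℝ) (ha₀ : a₀ ∈ Set.Ioo (-(1 / K)) (1 / K))
    (hlen : sInf {t : ℝ | τ t a₀ = (p : ℝ) / (q : ℝ)} <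
      sSup {t : ℝ | τ t a₀ = (p : ℝ) / (q : ℝ)}) :
    (interior {ta : ℝ × ℝ | ta.2 ∈ Set.Ioo (-(1 / K)) (1 / K) ∧
      τ ta.1 ta.2 = (p : ℝ) / (q : ℝ)}).Nonempty := by
  obtain ⟨t₁, ht₁, t₂, ht₂, hlt⟩ := exists_lt_of_sInf_lt_sSup hlen
  exact ⟨_, mem_interior_transNum_fiber hLip hper hτ ha₀ ht₁ ht₂ hlt⟩

theorem stmt_6 (φ : ℝ → ℝ) (K : ℝ) (hK : 0 < K)
    (hLip : ∀ x y : ℝ, |φ x - φ y| ≤ K * |x - y|)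
    (hper : ∀ x : ℝ, φ (x + 1) = φ x)
    (τ : ℝ → ℝ → ℝ)
    (hτ : ∀ t : ℝ, ∀ a ∈ Set.Ioo (-(1 / K)) (1 / K),
      IsTransNum (fun x => x + t + a * φ x) (τ t a))
    (p : ℤ) (q : ℕ) (hq : 1 ≤ q) (hpq : Nat.Coprime p.natAbs q)
    (a₀ : ℝ) (ha₀ : a₀ ∈ Set.Ioo (-(1 / K)) (1 / K))
    (hlen : sInf {t : ℝ | τ t a₀ = (p : ℝ) / (q : ℝ)} <
      sSup {t : ℝ | τ t a₀ = (p : ℝ) / (q : ℝ)}) :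
    (interior {ta : ℝ × ℝ | ta.2 ∈ Set.Ioo (-(1 / K)) (1 / K) ∧
      τ ta.1 ta.2 = (p : ℝ) / (q : ℝ)}).Nonempty :=
  stmt_6_general φ K hLip hper τ hτ p q a₀ ha₀ hlen
end
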